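/- For the longest permutation w₀ of S_n, whose Rothe diagram is the staircase with left-justified rows of lengths 1, 2, ..., n−1 from top to bottom, every cell has equally many cells above it in its column as to its right in its row; consequently, the map sending each entry i to binom(n,2) − i + 1 is an involution on the set of standard balanced tableaux on this diagram. -/

import Mathlib

/-- The Coxeter length of `w`: the number of inversion pairs. -/
def invCount {n : ℕ} (w : Equiv.Perm (Fin n)) : ℕ :=
  (Finset.univ.filter fun p : Fin n × Fin n => p.1 < p.2 ∧ w p.2 < w p.1).card

/-- The Rothe diagram of `w` (0-indexed): the cells `(i, w j)` for inversions `i < j`,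
`w j < w i`, as a subset of `ℕ × ℕ` (first coordinate the row, drawn with row `0` at the
bottom so that "above" means larger first coordinate; second coordinate the column). -/
def RotheD (n : ℕ) (w : Equiv.Perm (Fin n)) : Finset (ℕ × ℕ) :=
  (Finset.univ.filter fun p : Fin n × Fin n => p.1 < p.2 ∧ w p.2 < w p.1).image
    fun p => ((p.1 : ℕ), (w p.2 : ℕ))

/-- A standard balanced tableau on a diagram `D`: a bijective filling of the cells of `D`
by `1, …, |D|` such that for every cell, the number of larger entries to its right in its
row equals the number of smaller entries above it in its column. -/
def IsSBT (D : Finset (ℕ × ℕ)) (T : ℕ × ℕ → ℕ) : Prop :=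
  Set.InjOn T ↑D ∧ D.image T = Finset.Icc 1 D.card ∧
  ∀ x ∈ D, (D.filter fun y => y.1 = x.1 ∧ x.2 < y.2 ∧ T x < T y).card
    = (D.filter fun y => y.2 = x.2 ∧ x.1 < y.1 ∧ T y < T x).card

/-!
The Rothe diagram of `w₀` is the staircase `{(r, c) | r + c + 2 ≤ n}`, which is symmetric under
transposition; its cell `(r, c)` has `n - 2 - r - c` cells to its right and, by the symmetry,
equally many above it. On any diagram with this property, replacing each entry `t` of a standard
balanced tableau by `|D| + 1 - t` exchanges "larger" and "smaller". The number of larger entries to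
the right of a cell becomes the arm length minus the old such number, and likewise in the column;
since arm and leg lengths agree, the balance condition survives. Here `|D| = ℓ(w₀) = C(n, 2)`.
-/

open Finset

theorem card_rotheD {n : ℕ} (w : Equiv.Perm (Fin n)) : (RotheD n w).card = invCount w :=
  card_image_of_injective _ fun p q h => by
    simp only [Prod.mk.injEq, Fin.val_inj, w.injective.eq_iff] at h
    exact Prod.ext h.1 h.2

theorem invCount_revPerm (n : ℕ) : invCount (Fin.revPerm : Equiv.Perm (Fin n)) = n.choose 2 := by
  rw [invCount, ← Fintype.card_fin n, ← Fintype.card_product_filter_lt, Fintype.card_fin]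
  congr 1
  exact filter_congr fun p _ => by simp [Fin.rev_lt_rev]

theorem mem_rotheD_revPerm {n : ℕ} {p : ℕ × ℕ} :
    p ∈ RotheD n (Fin.revPerm : Equiv.Perm (Fin n)) ↔ p.1 + p.2 + 2 ≤ n := by
  obtain ⟨a, b⟩ := p
  simp only [RotheD, mem_image, mem_filter, mem_univ, true_and, Fin.revPerm_apply,
    Fin.val_rev, Prod.mk.injEq, Prod.exists, Fin.lt_def]
  constructor
  · rintro ⟨i, j, ⟨hij, -⟩, rfl, rfl⟩
    omega
  · intro h
    exact ⟨⟨a, by omega⟩, ⟨n - 1 - b, by omega⟩, ⟨by simp only; omega, by simp only; omega⟩,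
      rfl, by simp only; omega⟩

theorem card_rotheD_revPerm_row (n : ℕ) (x : ℕ × ℕ) :
    ((RotheD n (Fin.revPerm : Equiv.Perm (Fin n))).filter
      fun y => y.1 = x.1 ∧ x.2 < y.2).card = n - 2 - x.1 - x.2 := by
  have hrow : (RotheD n (Fin.revPerm : Equiv.Perm (Fin n))).filter
      (fun y => y.1 = x.1 ∧ x.2 < y.2) = (Ico (x.2 + 1) (n - 1 - x.1)).image (x.1, ·) := by
    ext ⟨a, b⟩
    simp only [mem_filter, mem_rotheD_revPerm, mem_image, mem_Ico, Prod.mk.injEq]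
    constructor
    · rintro ⟨hab, rfl, hb⟩
      exact ⟨b, by omega, rfl, rfl⟩
    · rintro ⟨c, hc, rfl, rfl⟩
      omega
  rw [hrow, card_image_of_injective _ (Prod.mk_right_injective x.1), Nat.card_Ico]
  omega

theorem card_filter_column_eq_card_filter_row_swap {α : Type*} [LinearOrder α]
    {D : Finset (α × α)} (hD : ∀ p, p.swap ∈ D ↔ p ∈ D) (x : α × α) :
    (D.filter fun y => y.2 = x.2 ∧ x.1 < y.1).card
      = (D.filter fun y => y.1 = x.2 ∧ x.1 < y.2).card :=
  card_equiv (Equiv.prodComm α α) fun p => by simp [hD]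

theorem card_rotheD_revPerm_column (n : ℕ) (x : ℕ × ℕ) :
    ((RotheD n (Fin.revPerm : Equiv.Perm (Fin n))).filter
      fun y => y.2 = x.2 ∧ x.1 < y.1).card = n - 2 - x.1 - x.2 := by
  have hswap (p : ℕ × ℕ) : p.swap ∈ RotheD n Fin.revPerm ↔ p ∈ RotheD n Fin.revPerm := by
    simp only [mem_rotheD_revPerm, Prod.fst_swap, Prod.snd_swap]
    omega
  have hrow := card_rotheD_revPerm_row n x.swap
  simp only [Prod.fst_swap, Prod.snd_swap] at hrow
  rw [card_filter_column_eq_card_filter_row_swap hswap, hrow]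
  omega

theorem card_rotheD_revPerm_column_eq_row (n : ℕ) (x : ℕ × ℕ) :
    ((RotheD n (Fin.revPerm : Equiv.Perm (Fin n))).filter
      fun y => y.2 = x.2 ∧ x.1 < y.1).card
      = ((RotheD n (Fin.revPerm : Equiv.Perm (Fin n))).filter
        fun y => y.1 = x.1 ∧ x.2 < y.2).card := by
  rw [card_rotheD_revPerm_column, card_rotheD_revPerm_row]

theorem card_filter_lt_add_card_filter_gt {α β : Type*} [LinearOrder β] {D : Finset α}
    {T : α → β} (hT : Set.InjOn T D) {x : α} (hx : x ∈ D) (P : α → Prop) [DecidablePred P]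
    (hPx : ¬ P x) :
    (D.filter fun y => P y ∧ T y < T x).card + (D.filter fun y => P y ∧ T x < T y).card
      = (D.filter P).card := by
  rw [← card_filter_add_card_filter_not (s := D.filter P) (fun y => T y < T x),
    filter_filter, filter_filter]
  congr 2
  refine filter_congr fun y hy => and_congr_right fun hPy => ?_
  have hne : T x ≠ T y := fun h => hPx (hT hx hy h ▸ hPy)
  exact (not_lt.trans hne.le_iff_lt).symm

namespace IsSBT

variable {D : Finset (ℕ × ℕ)} {T : ℕ × ℕ → ℕ}

theorem apply_mem_Icc (hT : IsSBT D T) {x : ℕ × ℕ} (hx : x ∈ D) : T x ∈ Icc 1 D.card :=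
  hT.2.1 ▸ mem_image_of_mem T hx

theorem complement
    (hD : ∀ x ∈ D, (D.filter fun y => y.2 = x.2 ∧ x.1 < y.1).card
      = (D.filter fun y => y.1 = x.1 ∧ x.2 < y.2).card)
    (hT : IsSBT D T) : IsSBT D (fun z => D.card + 1 - T z) := by
  have hT_bounds {x} (hx : x ∈ D) : 1 ≤ T x ∧ T x ≤ D.card := mem_Icc.mp (hT.apply_mem_Icc hx)
  refine ⟨fun a ha b hb h => hT.1 ha hb ?_, ?_, fun x hx => ?_⟩
  · have := hT_bounds ha; have := hT_bounds hb; simp only at h; omega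
  · rw [show (fun z => D.card + 1 - T z) = (D.card + 1 - ·) ∘ T from rfl, ← image_image,
      hT.2.1]
    ext t
    simp only [mem_image, mem_Icc]
    exact ⟨by rintro ⟨s, hs, rfl⟩; omega, fun ht => ⟨D.card + 1 - t, by omega, by omega⟩⟩
  · have hrev {y z} (hy : y ∈ D) (hz : z ∈ D) :
        D.card + 1 - T y < D.card + 1 - T z ↔ T z < T y := by
      have := hT_bounds hy; have := hT_bounds hz; omega
    have hrow := card_filter_lt_add_card_filter_gt hT.1 hx (fun y => y.1 = x.1 ∧ x.2 < y.2)
      (by simp)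
    have hcol := card_filter_lt_add_card_filter_gt hT.1 hx (fun y => y.2 = x.2 ∧ x.1 < y.1)
      (by simp)
    have hbal := hT.2.2 x hx
    simp only [and_assoc] at hrow hcol
    have hrow_rev : #{y ∈ D | y.1 = x.1 ∧ x.2 < y.2 ∧ D.card + 1 - T x < D.card + 1 - T y}
        = #{y ∈ D | y.1 = x.1 ∧ x.2 < y.2 ∧ T y < T x} :=
      congrArg card (filter_congr fun y hy => by rw [hrev hx hy])
    have hcol_rev : #{y ∈ D | y.2 = x.2 ∧ x.1 < y.1 ∧ D.card + 1 - T y < D.card + 1 - T x}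
        = #{y ∈ D | y.2 = x.2 ∧ x.1 < y.1 ∧ T x < T y} :=
      congrArg card (filter_congr fun y hy => by rw [hrev hy hx])
    have := hD x hx
    simp only [hrow_rev, hcol_rev]
    omega

end IsSBT

/-- For the longest permutation `w₀` of `S_n` (here `Fin.revPerm`), whose Rothe diagram
is the staircase, every cell has as many cells above it in its column as to its right in
its row; consequently the map sending each entry `i` to `C(n,2) - i + 1` sends standard
balanced tableaux to standard balanced tableaux and is an involution on them. -/
theorem staircase_complement_involution (n : ℕ) :
    (∀ x ∈ RotheD n (Fin.revPerm : Equiv.Perm (Fin n)),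
      ((RotheD n (Fin.revPerm : Equiv.Perm (Fin n))).filter
          fun y => y.2 = x.2 ∧ x.1 < y.1).card
        = ((RotheD n (Fin.revPerm : Equiv.Perm (Fin n))).filter
          fun y => y.1 = x.1 ∧ x.2 < y.2).card) ∧
    (∀ T : ℕ × ℕ → ℕ, IsSBT (RotheD n (Fin.revPerm : Equiv.Perm (Fin n))) T →
      IsSBT (RotheD n (Fin.revPerm : Equiv.Perm (Fin n)))
        (fun z => n.choose 2 + 1 - T z)) ∧
    (∀ T : ℕ × ℕ → ℕ, IsSBT (RotheD n (Fin.revPerm : Equiv.Perm (Fin n))) T →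
      ∀ x ∈ RotheD n (Fin.revPerm : Equiv.Perm (Fin n)),
        n.choose 2 + 1 - (n.choose 2 + 1 - T x) = T x) := by
  have hcard : (RotheD n (Fin.revPerm : Equiv.Perm (Fin n))).card = n.choose 2 := by
    rw [card_rotheD, invCount_revPerm]
  refine ⟨fun x _ => card_rotheD_revPerm_column_eq_row n x,
    fun T hT => hcard ▸ hT.complement fun x _ => card_rotheD_revPerm_column_eq_row n x,
    fun T hT x hx => ?_⟩
  have := mem_Icc.mp (hT.apply_mem_Icc hx)
  omega
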